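/- arXiv:1506.03728 — 2 statements merged into one kernel-verified Lean document; each statement's English description precedes it below -/
import Mathlib

section
/- In a simple line arrangement L in ℝ², if F and F' are adjacent bounded faces, then it is not the case that both exactly three lines of L meet the closure of F and exactly three lines of L meet the closure of F' (no two bounded triangular faces are adjacent). -/
/-!
Every face is the open cell cut out by strict sign conditions on affine equations of the
lines, its closure is the corresponding closed cell, and a closed cell is already cut out by
the lines that touch it. If `F` and `F'` are adjacent across the line `l`, they lie on the same
side of every other line and on opposite sides of `l`. If the closure of `F` touches only
`l, b, c`, boundedness puts both points `l ∩ b` and `l ∩ c` into it, hence into the closure of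
`F'`; so the closure of `F'` is also cut out by `l, b, c`, and the two closures together form
the wedge cut out by `b` and `c` alone. That wedge contains a ray, contradicting boundedness.
-/

open Set

/-- A point of the Euclidean plane. -/
abbrev Pt : Type := ℝ × ℝ

/-- A line: a 1-dimensional affine subspace of ℝ², described parametrically. -/
def IsLine (l : Set Pt) : Prop :=
  ∃ p v : Pt, v ≠ 0 ∧ l = {q : Pt | ∃ t : ℝ, q = p + t • v}

/-- A simple line arrangement: a finite set of lines, any two distinct lines meet in
exactly one point, and no point lies on three distinct lines. -/
def SimpleArrangement (L : Finset (Set Pt)) : Prop :=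
  (∀ l ∈ L, IsLine l) ∧
  (∀ l ∈ L, ∀ l' ∈ L, l ≠ l' → ∃! p : Pt, p ∈ l ∧ p ∈ l') ∧
  (∀ p : Pt, {l : Set Pt | l ∈ L ∧ p ∈ l}.ncard ≤ 2)

/-- The faces of the arrangement: connected components of the complement of the union. -/
def IsFace (L : Finset (Set Pt)) (F : Set Pt) : Prop :=
  ∃ p : Pt, p ∉ (⋃ l ∈ L, l) ∧ F = connectedComponentIn (⋃ l ∈ L, l)ᶜ p

/-- Two faces are adjacent (share an edge) if they are distinct and some point of
the intersection of their closures lies on exactly one line of `L`. -/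
def Adjacent (L : Finset (Set Pt)) (F F' : Set Pt) : Prop :=
  F ≠ F' ∧ ∃ p ∈ closure F ∩ closure F', ∃! l : Set Pt, l ∈ L ∧ p ∈ l

/-- A dual path: a finite sequence of pairwise distinct faces with consecutive faces
adjacent. Its length is the length of the list. -/
def IsDualPath (L : Finset (Set Pt)) (P : List (Set Pt)) : Prop :=
  (∀ F ∈ P, IsFace L F) ∧ P.Nodup ∧ P.Chain' (Adjacent L)


lemma AffineMap.map_add_smul {k V : Type*} [Field k] [AddCommGroup V] [Module k V]
    (f : V →ᵃ[k] k) (x v : V) (t : k) : f (x + t • v) = f x + t * f.linear v := by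
  rw [add_comm, ← vadd_eq_add, f.map_vadd, map_smul, vadd_eq_add, smul_eq_mul, add_comm]

lemma LinearMap.exists_ne_zero_nonneg_nonneg {V : Type*} [AddCommGroup V] [Module ℝ V]
    [FiniteDimensional ℝ V] (hV : 1 < Module.finrank ℝ V) (φ ψ : V →ₗ[ℝ] ℝ) :
    ∃ d : V, d ≠ 0 ∧ 0 ≤ φ d ∧ 0 ≤ ψ d := by
  obtain ⟨d, hd, hd0⟩ := Submodule.exists_mem_ne_zero_of_ne_bot
    (LinearMap.ker_ne_bot_of_finrank_lt (f := φ) (by simpa using hV))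
  rw [LinearMap.mem_ker] at hd
  rcases le_total 0 (ψ d) with h | h
  · exact ⟨d, hd0, hd.ge, h⟩
  · exact ⟨-d, neg_ne_zero.2 hd0, by simp [hd], by simpa using h⟩

lemma not_isBounded_of_forall_add_smul_mem {E : Type*} [NormedAddCommGroup E] [NormedSpace ℝ E]
    {s : Set E} {x d : E} (hd : d ≠ 0) (h : ∀ t : ℝ, 0 ≤ t → x + t • d ∈ s) :
    ¬Bornology.IsBounded s := by
  intro hs
  obtain ⟨C, hC⟩ := hs.exists_norm_le
  have hd' : 0 < ‖d‖ := norm_pos_iff.2 hd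
  have hC₀ : 0 ≤ C := (norm_nonneg _).trans (hC _ (h 0 le_rfl))
  set t := (C + ‖x‖ + 1) / ‖d‖
  have ht : 0 ≤ t := by positivity
  have : t * ‖d‖ ≤ C + ‖x‖ := calc
    t * ‖d‖ = ‖(x + t • d) - x‖ := by rw [add_sub_cancel_left, norm_smul, Real.norm_of_nonneg ht]
    _ ≤ ‖x + t • d‖ + ‖x‖ := norm_sub_le _ _
    _ ≤ C + ‖x‖ := by gcongr; exact hC _ (h t ht)
  rw [div_mul_cancel₀ _ hd'.ne'] at this
  linarith

lemma exists_add_mul_eq_zero_pos_of_mul_neg {a a' b b' : ℝ} (ha : 0 < a) (ha' : 0 < a')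
    (hbb' : b * b' < 0) : ∃ t : ℝ, a + t * b = 0 ∧ 0 < a' + t * b' := by
  have hb : b ≠ 0 := by
    rintro rfl
    simp at hbb'
  refine ⟨-a / b, by field_simp; ring, ?_⟩
  have e : a' + -a / b * b' = a' - a * (b * b') / b ^ 2 := by
    field_simp
    ring
  have : a * (b * b') / b ^ 2 < 0 := div_neg_of_neg_of_pos (mul_neg_of_pos_of_neg ha hbb')
    (by positivity)
  linarith

lemma Set.exists_eq_insert_pair_of_ncard_eq_three {α : Type*} {T : Set α} (h : T.ncard = 3)
    {a : α} (ha : a ∈ T) : ∃ b c, a ≠ b ∧ a ≠ c ∧ b ≠ c ∧ T = {a, b, c} := by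
  obtain ⟨x, y, z, hxy, hxz, hyz, rfl⟩ := Set.ncard_eq_three.1 h
  obtain rfl | rfl | rfl := ha
  · exact ⟨y, z, hxy, hxz, hyz, rfl⟩
  · exact ⟨x, z, hxy.symm, hyz, hxz, Set.insert_comm _ _ _⟩
  · refine ⟨x, y, hxz.symm, hyz.symm, hxy, ?_⟩
    ext
    simp only [mem_insert_iff, mem_singleton_iff]
    tauto

lemma IsLine.exists_affineMap {l : Set Pt} (hl : IsLine l) :
    ∃ f : Pt →ᵃ[ℝ] ℝ, ∀ q, q ∈ l ↔ f q = 0 := by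
  obtain ⟨p, v, hv, rfl⟩ := hl
  let φ : Pt →ₗ[ℝ] ℝ := v.2 • LinearMap.fst ℝ ℝ ℝ - v.1 • LinearMap.snd ℝ ℝ ℝ
  refine ⟨φ.toAffineMap - AffineMap.const ℝ Pt (φ p), fun q => ?_⟩
  have hf : (φ.toAffineMap - AffineMap.const ℝ Pt (φ p)) q =
      (q.1 - p.1) * v.2 - (q.2 - p.2) * v.1 := by
    simp only [φ, AffineMap.coe_sub, LinearMap.coe_toAffineMap, AffineMap.coe_const,
      Pi.sub_apply, Function.const_apply, LinearMap.sub_apply, LinearMap.smul_apply,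
      LinearMap.fst_apply, LinearMap.snd_apply, smul_eq_mul]
    ring
  rw [hf]
  constructor
  · rintro ⟨t, rfl⟩
    simp only [Prod.fst_add, Prod.snd_add, Prod.smul_fst, Prod.smul_snd, smul_eq_mul]
    ring
  · intro h
    have hv' : v.1 ≠ 0 ∨ v.2 ≠ 0 := by
      by_contra! h'
      exact hv (Prod.ext h'.1 h'.2)
    rcases hv' with h1 | h2
    · refine ⟨(q.1 - p.1) / v.1, Prod.ext ?_ ?_⟩
      · simp only [Prod.fst_add, Prod.smul_fst, smul_eq_mul]
        field_simp
        ring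
      · simp only [Prod.snd_add, Prod.smul_snd, smul_eq_mul]
        field_simp
        linear_combination -h
    · refine ⟨(q.2 - p.2) / v.2, Prod.ext ?_ ?_⟩
      · simp only [Prod.fst_add, Prod.smul_fst, smul_eq_mul]
        field_simp
        linear_combination h
      · simp only [Prod.snd_add, Prod.smul_snd, smul_eq_mul]
        field_simp
        ring

lemma IsLine.exists_direction {l : Set Pt} (hl : IsLine l) :
    ∃ v : Pt, v ≠ 0 ∧ ∀ q ∈ l, ∀ t : ℝ, q + t • v ∈ l := by
  obtain ⟨p, v, hv, rfl⟩ := hl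
  refine ⟨v, hv, ?_⟩
  rintro _ ⟨s, rfl⟩ t
  exact ⟨s + t, by rw [add_smul, add_assoc]⟩

/-- Junk value `0` when `l` is not a line. -/
noncomputable def lineEq (l : Set Pt) : Pt →ᵃ[ℝ] ℝ :=
  open Classical in
  if h : ∃ f : Pt →ᵃ[ℝ] ℝ, ∀ q, q ∈ l ↔ f q = 0 then h.choose else 0

lemma IsLine.mem_iff_lineEq_eq_zero {l : Set Pt} (hl : IsLine l) {q : Pt} :
    q ∈ l ↔ lineEq l q = 0 := by
  have h := hl.exists_affineMap
  rw [lineEq, dif_pos h]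
  exact h.choose_spec q

/-- `side l p` is positive exactly on the open half-plane of `l` that contains `p`. -/
noncomputable def side (l : Set Pt) (p : Pt) : Pt →ᵃ[ℝ] ℝ := lineEq l p • lineEq l

lemma side_apply (l : Set Pt) (p q : Pt) : side l p q = lineEq l p * lineEq l q := rfl

lemma side_self_pos {l : Set Pt} (hl : IsLine l) {p : Pt} (hp : p ∉ l) : 0 < side l p p :=
  mul_self_pos.2 fun h => hp (hl.mem_iff_lineEq_eq_zero.2 h)

lemma side_eq_zero_iff {l : Set Pt} (hl : IsLine l) {p q : Pt} (hp : p ∉ l) :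
    side l p q = 0 ↔ q ∈ l := by
  rw [side_apply, mul_eq_zero, ← hl.mem_iff_lineEq_eq_zero, ← hl.mem_iff_lineEq_eq_zero]
  simp [hp]

lemma side_pos_of_side_pos_of_side_pos (l : Set Pt) {p p' x : Pt} (hx : 0 < side l p x)
    (hx' : 0 < side l p' x) : 0 < side l p p' := by
  simp only [side_apply] at *
  by_contra! h
  nlinarith [mul_pos hx hx', mul_nonpos_of_nonpos_of_nonneg h (mul_self_nonneg (lineEq l x))]

lemma side_nonneg_of_side_nonneg_of_side_pos (l : Set Pt) {p p' q : Pt}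
    (hq : 0 ≤ side l p q) (hp' : 0 < side l p p') : 0 ≤ side l p' q := by
  simp only [side_apply] at *
  by_contra! h
  nlinarith [mul_neg_of_pos_of_neg hp' h, mul_nonneg hq (mul_self_nonneg (lineEq l p'))]

lemma side_nonneg_of_side_neg_of_side_neg (l : Set Pt) {p p' q : Pt}
    (hq : side l p q < 0) (hp' : side l p p' < 0) : 0 ≤ side l p' q := by
  simp only [side_apply] at *
  by_contra! h
  nlinarith [mul_pos_of_neg_of_neg hp' h,
    mul_nonpos_of_nonpos_of_nonneg hq.le (mul_self_nonneg (lineEq l p'))]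

def cell (L : Finset (Set Pt)) (p : Pt) : Set Pt := {q | ∀ l ∈ L, 0 < side l p q}

def closedCell (L : Finset (Set Pt)) (p : Pt) : Set Pt := {q | ∀ l ∈ L, 0 ≤ side l p q}

def touchingLines (L : Finset (Set Pt)) (K : Set Pt) : Set (Set Pt) :=
  {l | l ∈ L ∧ ∃ q ∈ K, q ∈ l}

lemma mem_of_touchingLines_eq {L : Finset (Set Pt)} {K : Set Pt} {l b c : Set Pt}
    (hT : touchingLines L K = {l, b, c}) : l ∈ L ∧ b ∈ L ∧ c ∈ L := by
  have h : ({l, b, c} : Set (Set Pt)) ⊆ L := hT ▸ fun m hm => hm.1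
  exact ⟨h (by simp), h (by simp), h (by simp)⟩

section cells

variable {L : Finset (Set Pt)} {p p' : Pt}

lemma mem_cell_self (hL : ∀ l ∈ L, IsLine l) (hp : ∀ l ∈ L, p ∉ l) : p ∈ cell L p :=
  fun l hl => side_self_pos (hL l hl) (hp l hl)

lemma isOpen_cell (L : Finset (Set Pt)) (p : Pt) : IsOpen (cell L p) := by
  have : cell L p = ⋂ l ∈ L, {q | 0 < side l p q} := by ext; simp [cell]
  rw [this]
  exact isOpen_biInter_finset fun l _ =>
    isOpen_lt continuous_const (side l p).continuous_of_finiteDimensional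

lemma convex_cell (L : Finset (Set Pt)) (p : Pt) : Convex ℝ (cell L p) := by
  have : cell L p = ⋂ l ∈ L, side l p ⁻¹' Ioi 0 := by ext; simp [cell]
  rw [this]
  exact convex_iInter₂ fun l _ => (convex_Ioi 0).affine_preimage (side l p)

lemma isClosed_closedCell (L : Finset (Set Pt)) (p : Pt) : IsClosed (closedCell L p) := by
  have : closedCell L p = ⋂ l ∈ L, {q | 0 ≤ side l p q} := by ext; simp [closedCell]
  rw [this]
  exact isClosed_biInter fun l _ =>
    isClosed_le continuous_const (side l p).continuous_of_finiteDimensional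

lemma cell_subset_closedCell : cell L p ⊆ closedCell L p := fun _ hq l hl => (hq l hl).le

lemma cell_subset_compl (hL : ∀ l ∈ L, IsLine l) (hp : ∀ l ∈ L, p ∉ l) :
    cell L p ⊆ (⋃ l ∈ L, l)ᶜ := by
  intro q hq hqL
  obtain ⟨l, hl, hql⟩ := mem_iUnion₂.1 hqL
  exact (hq l hl).ne' ((side_eq_zero_iff (hL l hl) (hp l hl)).2 hql)

lemma compl_inter_closedCell_subset_cell (hL : ∀ l ∈ L, IsLine l) (hp : ∀ l ∈ L, p ∉ l) :
    (⋃ l ∈ L, l)ᶜ ∩ closedCell L p ⊆ cell L p := by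
  rintro q ⟨hqL, hq⟩ l hl
  refine (hq l hl).lt_of_ne' fun h => hqL ?_
  exact mem_biUnion hl ((side_eq_zero_iff (hL l hl) (hp l hl)).1 h)

lemma closure_cell (hL : ∀ l ∈ L, IsLine l) (hp : ∀ l ∈ L, p ∉ l) :
    closure (cell L p) = closedCell L p := by
  refine (closure_minimal cell_subset_closedCell (isClosed_closedCell L p)).antisymm
    fun x hx => ?_
  have hseg : openSegment ℝ x p ⊆ cell L p := by
    rw [openSegment_eq_image_lineMap]
    rintro _ ⟨t, ⟨ht0, ht1⟩, rfl⟩ l hl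
    rw [AffineMap.apply_lineMap, AffineMap.lineMap_apply_ring]
    have := mem_cell_self hL hp l hl
    nlinarith [hx l hl]
  exact closure_mono hseg (by rw [closure_openSegment]; exact left_mem_segment ℝ x p)

lemma connectedComponentIn_eq_cell (hL : ∀ l ∈ L, IsLine l) (hp : ∀ l ∈ L, p ∉ l) :
    connectedComponentIn (⋃ l ∈ L, l)ᶜ p = cell L p := by
  refine Subset.antisymm ?_ ((convex_cell L p).isPreconnected.subset_connectedComponentIn
    (mem_cell_self hL hp) (cell_subset_compl hL hp))
  refine isPreconnected_connectedComponentIn.subset_left_of_subset_union (isOpen_cell L p)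
    (isClosed_closedCell L p).isOpen_compl
    (disjoint_compl_right.mono_right (compl_subset_compl.2 cell_subset_closedCell)) ?_
    ⟨p, mem_connectedComponentIn (by simpa using hp), mem_cell_self hL hp⟩
  intro q hq
  by_cases hqK : q ∈ closedCell L p
  · exact Or.inl (compl_inter_closedCell_subset_cell hL hp
      ⟨connectedComponentIn_subset _ _ hq, hqK⟩)
  · exact Or.inr hqK

lemma mem_closedCell_of_forall_touchingLines (hL : ∀ l ∈ L, IsLine l) (hp : ∀ l ∈ L, p ∉ l)
    {q : Pt} (hq : ∀ m ∈ touchingLines L (closedCell L p), 0 ≤ side m p q) :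
    q ∈ closedCell L p := by
  by_contra hqK
  obtain ⟨m₀, hm₀, hneg⟩ : ∃ m ∈ L, side m p q < 0 := by simpa [closedCell] using hqK
  have hne : L.Nonempty := ⟨m₀, hm₀⟩
  let φ : ℝ → ℝ := fun t => L.inf' hne fun m => side m p (AffineMap.lineMap p q t)
  have hφ : Continuous φ := Continuous.finset_inf'_apply hne fun m _ =>
    (side m p).continuous_of_finiteDimensional.comp AffineMap.lineMap_continuous
  have hφ₀ : 0 < φ 0 := (Finset.lt_inf'_iff hne).2 fun m hm => by
    simpa using mem_cell_self hL hp m hm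
  have hφ₁ : φ 1 < 0 := (Finset.inf'_lt_iff hne).2 ⟨m₀, hm₀, by simpa using hneg⟩
  obtain ⟨t, ⟨ht₀, ht₁⟩, hφt⟩ :=
    intermediate_value_Icc' zero_le_one hφ.continuousOn ⟨hφ₁.le, hφ₀.le⟩
  obtain ⟨m, hm, hmt⟩ := Finset.exists_mem_eq_inf' hne fun m => side m p (AffineMap.lineMap p q t)
  set y := AffineMap.lineMap p q t
  have hy : y ∈ closedCell L p := fun n hn => hφt ▸ Finset.inf'_le _ hn
  have hym : side m p y = 0 := hmt ▸ hφt
  -- `m` touches the closed cell at `y`, so `q` is on `p`'s side of `m`; as `y ∈ m` lies on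
  -- the segment from `p` to `q`, this forces `y = q`
  have hmq : 0 ≤ side m p q := hq m ⟨hm, y, hy, (side_eq_zero_iff (hL m hm) (hp m hm)).1 hym⟩
  have hmp := mem_cell_self hL hp m hm
  rw [AffineMap.apply_lineMap, AffineMap.lineMap_apply_ring] at hym
  obtain rfl : t = 1 := by nlinarith
  exact hφ₁.ne hφt

lemma side_pos_of_mem_closedCell (hL : ∀ l ∈ L, IsLine l) (hp : ∀ l ∈ L, p ∉ l) {x : Pt}
    (hx : x ∈ closedCell L p) {m : Set Pt} (hm : m ∈ L) (hxm : x ∉ m) : 0 < side m p x :=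
  (hx m hm).lt_of_ne' fun h => hxm ((side_eq_zero_iff (hL m hm) (hp m hm)).1 h)

lemma closedCell_inter_subset_closedCell {l : Set Pt} (hl : IsLine l) (hp' : p' ∉ l)
    (hsame : ∀ m ∈ L, m ≠ l → 0 < side m p p') : closedCell L p ∩ l ⊆ closedCell L p' := by
  rintro u ⟨hu, hul⟩ m hm
  by_cases hml : m = l
  · subst hml
    exact ((side_eq_zero_iff hl hp').2 hul).ge
  · exact side_nonneg_of_side_nonneg_of_side_pos m (hu m hm) (hsame m hm hml)

lemma exists_separating_line_of_adjacent (hL : ∀ l ∈ L, IsLine l) (hp : ∀ l ∈ L, p ∉ l)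
    (hp' : ∀ l ∈ L, p' ∉ l) (hadj : Adjacent L (cell L p) (cell L p')) :
    ∃ l ∈ L, ∃ x ∈ closedCell L p, x ∈ l ∧ (∀ m ∈ L, m ≠ l → x ∉ m) ∧
      side l p p' < 0 ∧ ∀ m ∈ L, m ≠ l → 0 < side m p p' := by
  obtain ⟨hne, x, ⟨hxK, hxK'⟩, l, ⟨hlL, hxl⟩, hxonly⟩ := hadj
  rw [closure_cell hL hp] at hxK
  rw [closure_cell hL hp'] at hxK'
  have hxm : ∀ m ∈ L, m ≠ l → x ∉ m := fun m hm hml hxm => hml (hxonly m ⟨hm, hxm⟩)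
  have hsame : ∀ m ∈ L, m ≠ l → 0 < side m p p' := fun m hm hml =>
    side_pos_of_side_pos_of_side_pos m (side_pos_of_mem_closedCell hL hp hxK hm (hxm m hm hml))
      (side_pos_of_mem_closedCell hL hp' hxK' hm (hxm m hm hml))
  refine ⟨l, hlL, x, hxK, hxl, hxm, lt_of_le_of_ne (not_lt.1 fun hl => hne ?_)
    fun h => hp' l hlL ((side_eq_zero_iff (hL l hlL) (hp l hlL)).1 h), hsame⟩
  have hp'K : p' ∈ connectedComponentIn (⋃ l ∈ L, l)ᶜ p := by
    rw [connectedComponentIn_eq_cell hL hp]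
    intro m hm
    by_cases hml : m = l
    · exact hml ▸ hl
    · exact hsame m hm hml
  rw [← connectedComponentIn_eq_cell hL hp, ← connectedComponentIn_eq_cell hL hp',
    connectedComponentIn_eq hp'K]

end cells

section triangles

variable {L : Finset (Set Pt)} {p p' : Pt} {l b c : Set Pt}

lemma exists_mem_closedCell_of_touchingLines_eq (hL : ∀ l ∈ L, IsLine l) (hp : ∀ l ∈ L, p ∉ l)
    (hbdd : Bornology.IsBounded (closedCell L p))
    (hT : touchingLines L (closedCell L p) = {l, b, c}) {x : Pt} (hx : x ∈ closedCell L p)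
    (hxl : x ∈ l) (hxb : x ∉ b) (hxc : x ∉ c) : ∃ u ∈ closedCell L p, u ∈ l ∧ u ∈ b := by
  obtain ⟨hlL, hbL, hcL⟩ := mem_of_touchingLines_eq hT
  have hK : ∀ u ∈ l, 0 ≤ side b p u → 0 ≤ side c p u → u ∈ closedCell L p := by
    intro u hul hbu hcu
    refine mem_closedCell_of_forall_touchingLines hL hp fun m hm => ?_
    rw [hT] at hm
    obtain rfl | rfl | rfl := hm
    · exact ((side_eq_zero_iff (hL m hlL) (hp m hlL)).2 hul).ge
    · exact hbu
    · exact hcu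
  obtain ⟨v, hv, hlv⟩ := (hL l hlL).exists_direction
  have hray : ∀ w : Pt, w ≠ 0 → (∀ t : ℝ, x + t • w ∈ l) →
      ¬(0 ≤ (side b p).linear w ∧ 0 ≤ (side c p).linear w) := by
    rintro w hw hwl ⟨hbw, hcw⟩
    refine not_isBounded_of_forall_add_smul_mem hw (fun t ht => hK _ (hwl t) ?_ ?_) hbdd
    · rw [AffineMap.map_add_smul]
      exact add_nonneg (hx b hbL) (mul_nonneg ht hbw)
    · rw [AffineMap.map_add_smul]
      exact add_nonneg (hx c hcL) (mul_nonneg ht hcw)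
  have hneg := hray (-v) (neg_ne_zero.2 hv) fun t => by simpa using hlv x hxl (-t)
  simp only [map_neg, neg_nonneg] at hneg
  obtain ⟨t, hbt, hct⟩ := exists_add_mul_eq_zero_pos_of_mul_neg
    (side_pos_of_mem_closedCell hL hp hx hbL hxb) (side_pos_of_mem_closedCell hL hp hx hcL hxc)
    (not_le.1 fun h => (mul_nonneg_iff.1 h).elim (hray v hv (hlv x hxl)) hneg)
  rw [← AffineMap.map_add_smul] at hbt hct
  exact ⟨x + t • v, hK _ (hlv x hxl t) hbt.ge hct.le, hlv x hxl t,
    (side_eq_zero_iff (hL b hbL) (hp b hbL)).1 hbt⟩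

lemma touchingLines_eq_of_sameSide (hL : ∀ l ∈ L, IsLine l) (hp : ∀ l ∈ L, p ∉ l)
    (hp' : ∀ l ∈ L, p' ∉ l) (hbdd : Bornology.IsBounded (closedCell L p))
    (hT : touchingLines L (closedCell L p) = {l, b, c}) (hlb : l ≠ b) (hlc : l ≠ c) (hbc : b ≠ c)
    (hT' : (touchingLines L (closedCell L p')).ncard = 3)
    (hsame : ∀ m ∈ L, m ≠ l → 0 < side m p p') {x : Pt} (hx : x ∈ closedCell L p)
    (hxl : x ∈ l) (hxb : x ∉ b) (hxc : x ∉ c) :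
    touchingLines L (closedCell L p') = {l, b, c} := by
  obtain ⟨hlL, hbL, hcL⟩ := mem_of_touchingLines_eq hT
  have hK := closedCell_inter_subset_closedCell (hL l hlL) (hp' l hlL) hsame
  obtain ⟨u, hu, hul, hub⟩ := exists_mem_closedCell_of_touchingLines_eq hL hp hbdd hT hx hxl hxb hxc
  obtain ⟨w, hw, hwl, hwc⟩ := exists_mem_closedCell_of_touchingLines_eq hL hp hbdd
    (hT.trans (by rw [Set.pair_comm])) hx hxl hxc hxb
  have hsub : {l, b, c} ⊆ touchingLines L (closedCell L p') := by
    rintro m (rfl | rfl | rfl)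
    · exact ⟨hlL, u, hK ⟨hu, hul⟩, hul⟩
    · exact ⟨hbL, u, hK ⟨hu, hul⟩, hub⟩
    · exact ⟨hcL, w, hK ⟨hw, hwl⟩, hwc⟩
  refine (Set.eq_of_subset_of_ncard_le hsub ?_ (L.finite_toSet.subset fun m hm => hm.1)).symm
  rw [hT', Set.ncard_eq_three.2 ⟨l, b, c, hlb, hlc, hbc, rfl⟩]

lemma not_isBounded_closedCell_union (hL : ∀ l ∈ L, IsLine l) (hp : ∀ l ∈ L, p ∉ l)
    (hp' : ∀ l ∈ L, p' ∉ l) (hT : touchingLines L (closedCell L p) = {l, b, c})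
    (hT' : touchingLines L (closedCell L p') = {l, b, c}) (hl : side l p p' < 0)
    (hb : 0 < side b p p') (hc : 0 < side c p p') {x : Pt} (hx : x ∈ closedCell L p) :
    ¬Bornology.IsBounded (closedCell L p ∪ closedCell L p') := by
  obtain ⟨-, hbL, hcL⟩ := mem_of_touchingLines_eq hT
  obtain ⟨d, hd, hbd, hcd⟩ := LinearMap.exists_ne_zero_nonneg_nonneg (by simp)
    (side b p).linear (side c p).linear
  refine not_isBounded_of_forall_add_smul_mem (x := x) hd fun t ht => ?_
  have hbt : 0 ≤ side b p (x + t • d) := by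
    rw [AffineMap.map_add_smul]
    exact add_nonneg (hx b hbL) (mul_nonneg ht hbd)
  have hct : 0 ≤ side c p (x + t • d) := by
    rw [AffineMap.map_add_smul]
    exact add_nonneg (hx c hcL) (mul_nonneg ht hcd)
  by_cases hlt : 0 ≤ side l p (x + t • d)
  · refine Or.inl (mem_closedCell_of_forall_touchingLines hL hp fun m hm => ?_)
    rw [hT] at hm
    obtain rfl | rfl | rfl := hm <;> assumption
  · refine Or.inr (mem_closedCell_of_forall_touchingLines hL hp' fun m hm => ?_)
    rw [hT'] at hm
    obtain rfl | rfl | rfl := hm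
    · exact side_nonneg_of_side_neg_of_side_neg m (not_le.1 hlt) hl
    · exact side_nonneg_of_side_nonneg_of_side_pos m hbt hb
    · exact side_nonneg_of_side_nonneg_of_side_pos m hct hc

end triangles

/-- No two bounded triangular faces (faces whose closures meet exactly three lines)
are adjacent in a simple line arrangement. -/
theorem statement6 (L : Finset (Set Pt)) (hL : SimpleArrangement L)
    (F F' : Set Pt) (hF : IsFace L F) (hF' : IsFace L F')
    (hb : Bornology.IsBounded F) (hb' : Bornology.IsBounded F')
    (hadj : Adjacent L F F') :
    ¬({l : Set Pt | l ∈ L ∧ ∃ p ∈ closure F, p ∈ l}.ncard = 3 ∧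
      {l : Set Pt | l ∈ L ∧ ∃ p ∈ closure F', p ∈ l}.ncard = 3) := by
  rintro ⟨hT, hT'⟩
  have hlines := hL.1
  obtain ⟨p, hp, rfl⟩ := hF
  obtain ⟨p', hp', rfl⟩ := hF'
  replace hp : ∀ l ∈ L, p ∉ l := by simpa using hp
  replace hp' : ∀ l ∈ L, p' ∉ l := by simpa using hp'
  simp only [connectedComponentIn_eq_cell hlines hp, connectedComponentIn_eq_cell hlines hp',
    closure_cell hlines hp, closure_cell hlines hp'] at hb hb' hadj hT hT'
  obtain ⟨l, hlL, x, hx, hxl, hxm, hl, hsame⟩ :=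
    exists_separating_line_of_adjacent hlines hp hp' hadj
  obtain ⟨b, c, hlb, hlc, hbc, hTeq⟩ :=
    Set.exists_eq_insert_pair_of_ncard_eq_three hT ⟨hlL, x, hx, hxl⟩
  obtain ⟨-, hbL, hcL⟩ := mem_of_touchingLines_eq hTeq
  have hbdd : Bornology.IsBounded (closedCell L p) := closure_cell hlines hp ▸ hb.closure
  have hbdd' : Bornology.IsBounded (closedCell L p') := closure_cell hlines hp' ▸ hb'.closure
  have hT'eq := touchingLines_eq_of_sameSide hlines hp hp' hbdd hTeq hlb hlc hbc hT' hsame hx hxl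
    (hxm b hbL hlb.symm) (hxm c hcL hlc.symm)
  exact not_isBounded_closedCell_union hlines hp hp' hTeq hT'eq hl (hsame b hbL hlb.symm)
    (hsame c hcL hlc.symm) hx (hbdd.union hbdd')
end

section
/- Let L be a simple arrangement of n ≥ 1 non-vertical lines in ℝ². Then the set B = {(x, y) ∈ ℝ² : y < a·x + b for every line {(x, a·x + b)} ∈ L} is nonempty and is a face of L (the bottom face), and for every face F of L, the minimum length of a dual path starting at F and ending at B equals level(F) + 1. -/
open Set

/-- A line is non-vertical if it is the graph of an affine function `x ↦ a·x + b`. -/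
def NonVertical (l : Set Pt) : Prop :=
  ∃ a b : ℝ, l = {q : Pt | q.2 = a * q.1 + b}

/-- A face `F` is above a non-vertical line `l` if `y > a·x + b` for every `(x, y) ∈ F`. -/
def Above (F l : Set Pt) : Prop :=
  ∃ a b : ℝ, l = {q : Pt | q.2 = a * q.1 + b} ∧ ∀ q ∈ F, a * q.1 + b < q.2

/-- The level of a face: the number of lines of `L` that the face is above. -/
noncomputable def faceLevel (L : Finset (Set Pt)) (F : Set Pt) : ℕ :=
  {l : Set Pt | l ∈ L ∧ Above F l}.ncard

/-!
Crossing one line changes the number of lines below a point by exactly one, so along a dual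
path the level drops by at most one per step, and the bottom face has level `0`: this is the
lower bound. For the upper bound, pick a point of `F` on a vertical line `x = x₀` at which no two
lines of `L` cross, and walk down this vertical. Each line it crosses is met at a point lying on
that line only, so the walk passes into an adjacent face one level lower, and after `level F`
crossings it reaches the bottom face.
-/

open Filter Topology

/-- The coefficients `(a, b)` of `l = {y = a x + b}` when `l` is non-vertical, a junk value
otherwise. -/
noncomputable def lineCoeffs (l : Set Pt) : ℝ × ℝ :=
  Classical.epsilon fun c : ℝ × ℝ => l = {q : Pt | q.2 = c.1 * q.1 + c.2}

noncomputable def lineHeight (l : Set Pt) (x : ℝ) : ℝ :=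
  (lineCoeffs l).1 * x + (lineCoeffs l).2

@[fun_prop]
theorem continuous_lineHeight (l : Set Pt) : Continuous (lineHeight l) := by
  unfold lineHeight; fun_prop

theorem eq_of_setOf_graph_eq {a b a' b' : ℝ}
    (h : {q : Pt | q.2 = a * q.1 + b} = {q : Pt | q.2 = a' * q.1 + b'}) : a = a' ∧ b = b' := by
  have h₀ : ((0 : ℝ), b) ∈ {q : Pt | q.2 = a' * q.1 + b'} := h ▸ by simp
  have h₁ : ((1 : ℝ), a + b) ∈ {q : Pt | q.2 = a' * q.1 + b'} := h ▸ by simp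
  simp only [mem_ofPred_eq] at h₀ h₁
  constructor <;> linarith

theorem lineHeight_of_eq_graph {l : Set Pt} {a b : ℝ} (h : l = {q : Pt | q.2 = a * q.1 + b})
    (x : ℝ) : lineHeight l x = a * x + b := by
  have hc := Classical.epsilon_spec (p := fun c : ℝ × ℝ => l = {q : Pt | q.2 = c.1 * q.1 + c.2})
    ⟨(a, b), h⟩
  obtain ⟨ha, hb⟩ := eq_of_setOf_graph_eq (hc.symm.trans h)
  rw [lineHeight, lineCoeffs, ha, hb]

namespace NonVertical

variable {l : Set Pt}

theorem eq_setOf_lineHeight (hl : NonVertical l) : l = {q : Pt | q.2 = lineHeight l q.1} := by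
  obtain ⟨a, b, h⟩ := hl
  simp only [lineHeight_of_eq_graph h]
  exact h

theorem mem_iff (hl : NonVertical l) {q : Pt} : q ∈ l ↔ q.2 = lineHeight l q.1 := by
  conv_lhs => rw [hl.eq_setOf_lineHeight]
  rfl

theorem isClosed (hl : NonVertical l) : IsClosed l := by
  rw [hl.eq_setOf_lineHeight]
  exact isClosed_eq continuous_snd (by fun_prop)

theorem above_iff (hl : NonVertical l) {F : Set Pt} :
    Above F l ↔ ∀ q ∈ F, lineHeight l q.1 < q.2 := by
  constructor
  · rintro ⟨a, b, h, hF⟩ q hq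
    rw [lineHeight_of_eq_graph h]
    exact hF q hq
  · exact fun hF => ⟨_, _, hl.eq_setOf_lineHeight, hF⟩

theorem lineHeight_lt_iff_of_isPreconnected (hl : NonVertical l) {S : Set Pt}
    (hS : IsPreconnected S) (hSl : ∀ q ∈ S, q ∉ l) {p q : Pt} (hp : p ∈ S) (hq : q ∈ S) :
    lineHeight l p.1 < p.2 ↔ lineHeight l q.1 < q.2 := by
  have hf : Continuous fun r : Pt => r.2 - lineHeight l r.1 := by fun_prop
  have key : ∀ {p q : Pt}, p ∈ S → q ∈ S →
      lineHeight l p.1 < p.2 → lineHeight l q.1 < q.2 := by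
    intro p q hp hq hpl
    by_contra hql
    obtain ⟨r, hrS, hr⟩ := hS.intermediate_value hq hp hf.continuousOn
      (show (0 : ℝ) ∈ Icc _ _ from ⟨by linarith [not_lt.mp hql], by linarith⟩)
    exact hSl r hrS (hl.mem_iff.mpr (sub_eq_zero.mp hr))
  exact ⟨key hp hq, key hq hp⟩

theorem eventually_lineHeight_lt_iff (hl : NonVertical l) {p : Pt} (hp : p ∉ l) :
    ∀ᶠ q in 𝓝 p, (lineHeight l q.1 < q.2 ↔ lineHeight l p.1 < p.2) := by
  have hh : Continuous fun q : Pt => lineHeight l q.1 := by fun_prop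
  rcases lt_or_gt_of_ne (mt hl.mem_iff.mpr hp) with h | h
  · filter_upwards [continuous_snd.continuousAt.eventually_lt hh.continuousAt h] with q hq
    exact iff_of_false (not_lt.mpr hq.le) (not_lt.mpr h.le)
  · filter_upwards [hh.continuousAt.eventually_lt continuous_snd.continuousAt h] with q hq
    exact iff_of_true hq h

end NonVertical

theorem subsingleton_setOf_lineHeight_eq {l l' : Set Pt} (hl : NonVertical l)
    (hl' : NonVertical l') (hne : l ≠ l') :
    {x | lineHeight l x = lineHeight l' x}.Subsingleton := by
  intro x₁ hx₁ x₂ hx₂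
  by_contra hx
  apply hne
  rw [hl.eq_setOf_lineHeight, hl'.eq_setOf_lineHeight]
  simp only [mem_ofPred_eq, lineHeight] at hx₁ hx₂
  have ha : (lineCoeffs l).1 = (lineCoeffs l').1 := by
    have : ((lineCoeffs l).1 - (lineCoeffs l').1) * (x₁ - x₂) = 0 := by
      linear_combination hx₁ - hx₂
    simpa [sub_eq_zero, hx] using this
  have hb : (lineCoeffs l).2 = (lineCoeffs l').2 := by
    rw [ha] at hx₁; linarith
  simp only [lineHeight, ha, hb]

theorem exists_gap_below {ι : Type*} (s : Finset ι) {h : ι → ℝ} (hinj : InjOn h s) {y : ℝ}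
    (hy : ∀ i ∈ s, h i ≠ y) (hbelow : ∃ i ∈ s, h i < y) :
    ∃ i₁ ∈ s, ∃ y', y' < h i₁ ∧ h i₁ < y ∧ ∀ i ∈ s, i ≠ i₁ → h i < y' ∨ y < h i := by
  obtain ⟨i₁, hi₁, hmax⟩ := (s.filter (h · < y)).exists_max_image h
    (let ⟨i, hi, hiy⟩ := hbelow; ⟨i, Finset.mem_filter.mpr ⟨hi, hiy⟩⟩)
  obtain ⟨hi₁s, hi₁y⟩ := Finset.mem_filter.mp hi₁
  have hnear : ∀ᶠ y' in 𝓝[<] h i₁, y' < h i₁ ∧ ∀ i ∈ s, h i < h i₁ → h i < y' := by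
    refine (eventually_nhdsWithin_of_forall fun _ hy' => hy').and ?_
    rw [eventually_all_finset]
    intro i _
    by_cases hi : h i < h i₁
    · exact ((lt_mem_nhds hi).filter_mono nhdsWithin_le_nhds).mono fun _ h' _ => h'
    · exact Eventually.of_forall fun _ h' => absurd h' hi
  obtain ⟨y', hy'i₁, hy'⟩ := hnear.exists
  refine ⟨i₁, hi₁s, y', hy'i₁, hi₁y, fun i hi hne => ?_⟩
  rcases lt_or_gt_of_ne (hy i hi) with hiy | hiy
  · refine .inl (hy' i hi (lt_of_le_of_ne (hmax i (Finset.mem_filter.mpr ⟨hi, hiy⟩)) ?_))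
    exact fun heq => hne (hinj hi hi₁s heq)
  · exact .inr hiy

theorem mem_closure_connectedComponentIn_of_openSegment_subset {E : Type*} [AddCommGroup E]
    [Module ℝ E] [TopologicalSpace E] [ContinuousAdd E] [ContinuousSMul ℝ E] {U : Set E}
    {p q : E} (hp : p ∈ U) (hpq : openSegment ℝ p q ⊆ U) :
    q ∈ closure (connectedComponentIn U p) := by
  have hsub : insert p (openSegment ℝ p q) ⊆ closure (openSegment ℝ p q) :=
    insert_subset (segment_subset_closure_openSegment (left_mem_segment ℝ p q)) subset_closure
  have hconn : IsPreconnected (insert p (openSegment ℝ p q)) :=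
    (convex_openSegment p q).isPreconnected.subset_closure (subset_insert _ _) hsub
  have hcomp := hconn.subset_connectedComponentIn (mem_insert p _) (insert_subset hp hpq)
  exact closure_mono ((subset_insert _ _).trans hcomp)
    (segment_subset_closure_openSegment (right_mem_segment ℝ p q))

theorem openSegment_vertical_subset {U : Set Pt} {x y₁ y₂ : ℝ} (hne : y₁ ≠ y₂)
    (h : ∀ t ∈ Ioo (min y₁ y₂) (max y₁ y₂), (x, t) ∈ U) :
    openSegment ℝ (x, y₁) (x, y₂) ⊆ U := by
  rw [← Prod.image_mk_openSegment_right, openSegment_eq_Ioo' hne]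
  exact image_subset_iff.mpr h

abbrev faceAt (L : Finset (Set Pt)) (p : Pt) : Set Pt :=
  connectedComponentIn (⋃ l ∈ L, l)ᶜ p

open Classical in
noncomputable def pointLevel (L : Finset (Set Pt)) (p : Pt) : ℕ :=
  (L.filter fun l => lineHeight l p.1 < p.2).card

def bottomRegion (L : Finset (Set Pt)) : Set Pt :=
  {p | ∀ l ∈ L, p.2 < lineHeight l p.1}

section Arrangement

variable {L : Finset (Set Pt)}

theorem isClosed_biUnion_of_nonVertical (hnv : ∀ l ∈ L, NonVertical l) :
    IsClosed (⋃ l ∈ L, l) :=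
  L.finite_toSet.isClosed_biUnion fun l hl => (hnv l hl).isClosed

theorem finite_setOf_not_injOn_lineHeight (hnv : ∀ l ∈ L, NonVertical l) :
    {x : ℝ | ¬ InjOn (lineHeight · x) L}.Finite := by
  refine Finite.subset (L.finite_toSet.biUnion fun l hl => (L.erase l).finite_toSet.biUnion
    fun l' hl' => (subsingleton_setOf_lineHeight_eq (hnv l hl)
      (hnv l' (Finset.mem_of_mem_erase hl')) (Finset.ne_of_mem_erase hl').symm).finite) ?_
  intro x hx
  simp only [InjOn, not_forall, mem_ofPred_eq, Finset.mem_coe] at hx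
  obtain ⟨l, hl, l', hl', heq, hne⟩ := hx
  exact mem_iUnion₂.mpr
    ⟨l, hl, mem_iUnion₂.mpr ⟨l', Finset.mem_erase.mpr ⟨Ne.symm hne, hl'⟩, heq⟩⟩

namespace IsFace

variable {F : Set Pt}

theorem subset_compl (hF : IsFace L F) : F ⊆ (⋃ l ∈ L, l)ᶜ := by
  obtain ⟨p, -, rfl⟩ := hF
  exact connectedComponentIn_subset _ _

theorem notMem_of_mem (hF : IsFace L F) {l : Set Pt} (hl : l ∈ L) {q : Pt} (hq : q ∈ F) :
    q ∉ l :=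
  fun hql => hF.subset_compl hq (mem_biUnion hl hql)

theorem eq_faceAt (hF : IsFace L F) {q : Pt} (hq : q ∈ F) : F = faceAt L q := by
  obtain ⟨p, -, rfl⟩ := hF
  exact connectedComponentIn_eq hq

theorem nonempty (hF : IsFace L F) : F.Nonempty := by
  obtain ⟨p, hp, rfl⟩ := hF
  exact ⟨p, mem_connectedComponentIn hp⟩

theorem isOpen (hnv : ∀ l ∈ L, NonVertical l) (hF : IsFace L F) : IsOpen F := by
  obtain ⟨p, -, rfl⟩ := hF
  exact (isClosed_biUnion_of_nonVertical hnv).isOpen_compl.connectedComponentIn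

theorem lineHeight_lt_iff (hnv : ∀ l ∈ L, NonVertical l) (hF : IsFace L F) {l : Set Pt}
    (hl : l ∈ L) {p q : Pt} (hp : p ∈ F) (hq : q ∈ F) :
    lineHeight l p.1 < p.2 ↔ lineHeight l q.1 < q.2 := by
  refine (hnv l hl).lineHeight_lt_iff_of_isPreconnected ?_ (fun _ => hF.notMem_of_mem hl) hp hq
  obtain ⟨p, -, rfl⟩ := hF
  exact isPreconnected_connectedComponentIn

theorem exists_mem_injOn_lineHeight (hnv : ∀ l ∈ L, NonVertical l) (hF : IsFace L F) :
    ∃ x₀ y, (x₀, y) ∈ F ∧ InjOn (lineHeight · x₀) L := by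
  obtain ⟨p, hp⟩ := hF.nonempty
  have hopen : IsOpen {x : ℝ | (x, p.2) ∈ F} := (hF.isOpen hnv).preimage (by fun_prop)
  obtain ⟨x₀, hgen, hx₀⟩ := ((finite_setOf_not_injOn_lineHeight hnv).countable.dense_compl ℝ)
    |>.exists_mem_open hopen ⟨p.1, hp⟩
  exact ⟨x₀, p.2, hx₀, not_not.mp hgen⟩

end IsFace

theorem faceLevel_eq_pointLevel (hnv : ∀ l ∈ L, NonVertical l) {F : Set Pt} (hF : IsFace L F)
    {p : Pt} (hp : p ∈ F) : faceLevel L F = pointLevel L p := by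
  rw [faceLevel, pointLevel, ← ncard_coe_finset]
  congr 1
  ext l
  simp only [Finset.coe_filter, mem_ofPred_eq, and_congr_right_iff]
  intro hl
  rw [(hnv l hl).above_iff]
  exact ⟨fun h => h p hp, fun h q hq => (hF.lineHeight_lt_iff hnv hl hp hq).mp h⟩

theorem faceLevel_faceAt (hnv : ∀ l ∈ L, NonVertical l) {p : Pt} (hp : p ∉ ⋃ l ∈ L, l) :
    faceLevel L (faceAt L p) = pointLevel L p :=
  faceLevel_eq_pointLevel hnv ⟨p, hp, rfl⟩ (mem_connectedComponentIn hp)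

theorem pointLevel_le_add_one {q q' : Pt} (l₀ : Set Pt)
    (h : ∀ l ∈ L, l ≠ l₀ → lineHeight l q.1 < q.2 → lineHeight l q'.1 < q'.2) :
    pointLevel L q ≤ pointLevel L q' + 1 := by
  unfold pointLevel
  calc (L.filter fun l => lineHeight l q.1 < q.2).card
      ≤ (insert l₀ (L.filter fun l => lineHeight l q'.1 < q'.2)).card := by
        refine Finset.card_le_card fun l hl => ?_
        obtain ⟨hlL, hlq⟩ := Finset.mem_filter.mp hl
        by_cases hl₀ : l = l₀
        · exact hl₀ ▸ Finset.mem_insert_self _ _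
        · exact Finset.mem_insert_of_mem (Finset.mem_filter.mpr ⟨hlL, h l hlL hl₀ hlq⟩)
    _ ≤ _ := Finset.card_insert_le _ _

theorem faceLevel_le_of_adjacent (hnv : ∀ l ∈ L, NonVertical l) {F F' : Set Pt}
    (hF : IsFace L F) (hF' : IsFace L F') (hA : Adjacent L F F') :
    faceLevel L F ≤ faceLevel L F' + 1 := by
  obtain ⟨-, p, ⟨hpF, hpF'⟩, l₀, -, huniq⟩ := hA
  have hnear : ∀ᶠ q in 𝓝 p, ∀ l ∈ L, l ≠ l₀ →
      (lineHeight l q.1 < q.2 ↔ lineHeight l p.1 < p.2) := by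
    rw [eventually_all_finset]
    intro l hl
    by_cases hl₀ : l = l₀
    · exact Eventually.of_forall fun _ h => absurd hl₀ h
    · exact ((hnv l hl).eventually_lineHeight_lt_iff fun hpl => hl₀ (huniq l ⟨hl, hpl⟩)).mono
        fun _ h _ => h
  obtain ⟨q, hqF, hq⟩ := ((mem_closure_iff_frequently.mp hpF).and_eventually hnear).exists
  obtain ⟨q', hq'F', hq'⟩ := ((mem_closure_iff_frequently.mp hpF').and_eventually hnear).exists
  rw [faceLevel_eq_pointLevel hnv hF hqF, faceLevel_eq_pointLevel hnv hF' hq'F']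
  exact pointLevel_le_add_one l₀ fun l hl hl₀ h => (hq' l hl hl₀).mpr ((hq l hl hl₀).mp h)

theorem faceLevel_le_getLast_add_length (hnv : ∀ l ∈ L, NonVertical l) :
    ∀ (F : Set Pt) (P : List (Set Pt)), (∀ G ∈ F :: P, IsFace L G) →
      (F :: P).IsChain (Adjacent L) →
      faceLevel L F ≤ faceLevel L ((F :: P).getLast (List.cons_ne_nil F P)) + P.length
  | _, [], _, _ => by simp
  | F, G :: P, hfaces, hchain => by
    rw [List.isChain_cons_cons] at hchain
    have hG := faceLevel_le_getLast_add_length hnv G P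
      (fun H hH => hfaces H (List.mem_cons_of_mem F hH)) hchain.2
    have hFG := faceLevel_le_of_adjacent hnv (hfaces F (by simp)) (hfaces G (by simp)) hchain.1
    rw [List.getLast_cons_cons, List.length_cons]
    omega

theorem convex_bottomRegion : Convex ℝ (bottomRegion L) := by
  have hL : bottomRegion L = ⋂ l ∈ L, {p : Pt | p.2 < lineHeight l p.1} := by
    ext p; simp [bottomRegion]
  refine hL ▸ convex_iInter₂ fun l _ => ?_
  have hlin : IsLinearMap ℝ fun p : Pt => p.2 - (lineCoeffs l).1 * p.1 :=
    ⟨fun p q => by simp only [Prod.snd_add, Prod.fst_add]; ring,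
      fun c p => by simp only [Prod.smul_snd, Prod.smul_fst, smul_eq_mul]; ring⟩
  have hl : {p : Pt | p.2 < lineHeight l p.1} =
      {p | p.2 - (lineCoeffs l).1 * p.1 < (lineCoeffs l).2} := by
    ext p
    simp only [mem_ofPred_eq, lineHeight]
    constructor <;> intro h <;> linarith
  exact hl ▸ convex_halfSpace_lt hlin _

theorem bottomRegion_nonempty (L : Finset (Set Pt)) : (bottomRegion L).Nonempty := by
  obtain ⟨m, hm⟩ := (L.image fun l => lineHeight l 0).bddBelow
  refine ⟨(0, m - 1), fun l hl => ?_⟩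
  have := hm (Finset.mem_coe.mpr (Finset.mem_image_of_mem (fun l => lineHeight l 0) hl))
  dsimp only
  linarith

theorem pointLevel_eq_zero_iff_mem_bottomRegion (hnv : ∀ l ∈ L, NonVertical l) {p : Pt}
    (hp : p ∉ ⋃ l ∈ L, l) :
    pointLevel L p = 0 ↔ p ∈ bottomRegion L := by
  rw [pointLevel, Finset.card_eq_zero, Finset.filter_eq_empty_iff]
  refine forall₂_congr fun l hl => ⟨fun h => lt_of_le_of_ne (not_lt.mp h) ?_, fun h => h.not_gt⟩
  exact fun heq => hp (mem_biUnion hl ((hnv l hl).mem_iff.mpr heq))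

theorem bottomRegion_subset_compl (hnv : ∀ l ∈ L, NonVertical l) :
    bottomRegion L ⊆ (⋃ l ∈ L, l)ᶜ := by
  intro q hq hqU
  obtain ⟨l, hl, hql⟩ := mem_iUnion₂.mp hqU
  exact (hq l hl).ne ((hnv l hl).mem_iff.mp hql)

theorem bottomRegion_eq_faceAt (hnv : ∀ l ∈ L, NonVertical l) {p : Pt}
    (hp : p ∈ bottomRegion L) : bottomRegion L = faceAt L p := by
  have hpU := bottomRegion_subset_compl hnv hp
  refine subset_antisymm (convex_bottomRegion.isPreconnected.subset_connectedComponentIn hp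
    (bottomRegion_subset_compl hnv)) fun q hq => ?_
  have hF : IsFace L (faceAt L p) := ⟨p, hpU, rfl⟩
  rw [← pointLevel_eq_zero_iff_mem_bottomRegion hnv (hF.subset_compl hq),
    ← faceLevel_eq_pointLevel hnv hF hq, faceLevel_faceAt hnv hpU,
    pointLevel_eq_zero_iff_mem_bottomRegion hnv hpU]
  exact hp

theorem isFace_bottomRegion (hnv : ∀ l ∈ L, NonVertical l) : IsFace L (bottomRegion L) :=
  let ⟨p, hp⟩ := bottomRegion_nonempty L
  ⟨p, bottomRegion_subset_compl hnv hp, bottomRegion_eq_faceAt hnv hp⟩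

theorem faceLevel_bottomRegion (hnv : ∀ l ∈ L, NonVertical l) :
    faceLevel L (bottomRegion L) = 0 :=
  let ⟨_, hp⟩ := bottomRegion_nonempty L
  (faceLevel_eq_pointLevel hnv (isFace_bottomRegion hnv) hp).trans
    ((pointLevel_eq_zero_iff_mem_bottomRegion hnv (bottomRegion_subset_compl hnv hp)).mpr hp)

theorem faceLevel_add_one_le_length (hnv : ∀ l ∈ L, NonVertical l) {P : List (Set Pt)}
    (hP : IsDualPath L P) {F : Set Pt} (hhead : P.head? = some F)
    (hlast : P.getLast? = some (bottomRegion L)) : faceLevel L F + 1 ≤ P.length := by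
  obtain ⟨hfaces, -, hchain⟩ := hP
  obtain ⟨P, rfl⟩ : ∃ P', P = F :: P' := by
    cases P with
    | nil => simp at hhead
    | cons G P' => exact ⟨P', by simpa using hhead⟩
  have hbound := faceLevel_le_getLast_add_length hnv F P hfaces hchain
  rw [List.getLast?_eq_some_getLast (List.cons_ne_nil F P), Option.some_inj] at hlast
  rw [hlast, faceLevel_bottomRegion hnv] at hbound
  simp only [List.length_cons]
  omega

theorem setOf_forall_graph_eq_bottomRegion (hnv : ∀ l ∈ L, NonVertical l) :
    {p : Pt | ∀ l ∈ L, ∀ a b : ℝ, l = {q : Pt | q.2 = a * q.1 + b} → p.2 < a * p.1 + b} =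
      bottomRegion L := by
  ext
  refine forall₂_congr fun l hl => ⟨fun h => h _ _ (hnv l hl).eq_setOf_lineHeight, ?_⟩
  intro h a b hab
  rwa [← lineHeight_of_eq_graph hab]

theorem pointLevel_add_one_of_crossing {x₀ y y' : ℝ} {l₁ : Set Pt} (hl₁ : l₁ ∈ L)
    (hy'c : y' < lineHeight l₁ x₀) (hcy : lineHeight l₁ x₀ < y)
    (hgap : ∀ l ∈ L, l ≠ l₁ → lineHeight l x₀ < y' ∨ y < lineHeight l x₀) :
    pointLevel L (x₀, y') + 1 = pointLevel L (x₀, y) := by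
  have hfilter : (L.filter fun l => lineHeight l x₀ < y') =
      (L.filter fun l => lineHeight l x₀ < y).erase l₁ := by
    ext l
    simp only [Finset.mem_filter, Finset.mem_erase]
    by_cases hl : l ∈ L
    · by_cases hll₁ : l = l₁
      · subst hll₁
        exact iff_of_false (fun h => by linarith [h.2]) (fun h => h.1 rfl)
      · rcases hgap l hl hll₁ with h | h
        · exact iff_of_true ⟨hl, h⟩ ⟨hll₁, hl, by linarith⟩
        · exact iff_of_false (fun h' => by linarith [h'.2]) (fun h' => by linarith [h'.2.2])
    · exact iff_of_false (fun h => hl h.1) (fun h => hl h.2.1)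
  unfold pointLevel
  rw [hfilter, Finset.card_erase_add_one (Finset.mem_filter.mpr ⟨hl₁, hcy⟩)]

theorem exists_adjacent_faceAt_below (hnv : ∀ l ∈ L, NonVertical l) {x₀ : ℝ}
    (hx₀ : InjOn (lineHeight · x₀) L) {y : ℝ} (hy : (x₀, y) ∉ ⋃ l ∈ L, l) {k : ℕ}
    (hk : pointLevel L (x₀, y) = k + 1) :
    ∃ y', (x₀, y') ∉ ⋃ l ∈ L, l ∧ pointLevel L (x₀, y') = k ∧
      Adjacent L (faceAt L (x₀, y)) (faceAt L (x₀, y')) := by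
  have hne : ∀ l ∈ L, lineHeight l x₀ ≠ y := fun l hl heq =>
    hy (mem_biUnion hl ((hnv l hl).mem_iff.mpr heq.symm))
  have hbelow : ∃ l ∈ L, lineHeight l x₀ < y := by
    have : 0 < pointLevel L (x₀, y) := hk ▸ k.succ_pos
    obtain ⟨l, hl⟩ := Finset.card_pos.mp this
    exact ⟨l, (Finset.mem_filter.mp hl).1, (Finset.mem_filter.mp hl).2⟩
  obtain ⟨l₁, hl₁, y', hy'c, hcy, hgap⟩ := exists_gap_below L hx₀ hne hbelow
  set c := lineHeight l₁ x₀
  have hoff : ∀ t, y' ≤ t → t ≤ y → t ≠ c → (x₀, t) ∉ ⋃ l ∈ L, l := by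
    intro t hy't hty htc htU
    obtain ⟨l, hl, htl⟩ := mem_iUnion₂.mp htU
    have ht : t = lineHeight l x₀ := (hnv l hl).mem_iff.mp htl
    by_cases hll₁ : l = l₁
    · exact htc (by rw [ht, hll₁])
    · rcases hgap l hl hll₁ with h | h <;> linarith
  have hy'U : (x₀, y') ∉ ⋃ l ∈ L, l := hoff y' le_rfl (by linarith) hy'c.ne
  have hlevel : pointLevel L (x₀, y') = k :=
    Nat.succ_injective ((pointLevel_add_one_of_crossing hl₁ hy'c hcy hgap).trans hk)
  refine ⟨y', hy'U, hlevel, ?_, (x₀, c), ⟨?_, ?_⟩, l₁, ⟨hl₁, (hnv l₁ hl₁).mem_iff.mpr rfl⟩, ?_⟩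
  · intro heq
    have := congrArg (faceLevel L) heq
    rw [faceLevel_faceAt hnv hy, faceLevel_faceAt hnv hy'U] at this
    omega
  · refine mem_closure_connectedComponentIn_of_openSegment_subset hy
      (openSegment_vertical_subset hcy.ne' fun t ht => hoff t ?_ ?_ ?_)
    all_goals rw [min_eq_right hcy.le, max_eq_left hcy.le] at ht
    exacts [by linarith [ht.1], ht.2.le, ht.1.ne']
  · refine mem_closure_connectedComponentIn_of_openSegment_subset hy'U
      (openSegment_vertical_subset hy'c.ne fun t ht => hoff t ?_ ?_ ?_)
    all_goals rw [min_eq_left hy'c.le, max_eq_right hy'c.le] at ht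
    exacts [ht.1.le, by linarith [ht.2], ht.2.ne]
  · rintro l ⟨hl, hcl⟩
    exact hx₀ hl hl₁ ((hnv l hl).mem_iff.mp hcl).symm

theorem exists_dualPath_faceAt_to_bottomRegion (hnv : ∀ l ∈ L, NonVertical l) {x₀ : ℝ}
    (hx₀ : InjOn (lineHeight · x₀) L) :
    ∀ (k : ℕ) (y : ℝ), (x₀, y) ∉ ⋃ l ∈ L, l → pointLevel L (x₀, y) = k →
      ∃ P : List (Set Pt), IsDualPath L P ∧ P.head? = some (faceAt L (x₀, y)) ∧
        P.getLast? = some (bottomRegion L) ∧ P.length = k + 1 ∧ ∀ G ∈ P, faceLevel L G ≤ k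
  | 0, y, hy, hk => by
    have hbot := bottomRegion_eq_faceAt hnv
      ((pointLevel_eq_zero_iff_mem_bottomRegion hnv hy).mp hk)
    refine ⟨[bottomRegion L], ⟨?_, List.nodup_singleton _, List.isChain_singleton _⟩, ?_, rfl,
      rfl, ?_⟩
    · simpa using isFace_bottomRegion hnv
    · rw [hbot]; rfl
    · simp [faceLevel_bottomRegion hnv]
  | k + 1, y, hy, hk => by
    obtain ⟨y', hy', hk', hadj⟩ := exists_adjacent_faceAt_below hnv hx₀ hy hk
    obtain ⟨P, ⟨hfaces, hnodup, hchain⟩, hhead, hlast, hlen, hlevel⟩ :=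
      exists_dualPath_faceAt_to_bottomRegion hnv hx₀ k y' hy' hk'
    obtain ⟨P, rfl⟩ : ∃ P', P = faceAt L (x₀, y') :: P' := by
      cases P with
      | nil => simp at hhead
      | cons G P' => exact ⟨P', by simpa using hhead⟩
    have htop : faceLevel L (faceAt L (x₀, y)) = k + 1 := (faceLevel_faceAt hnv hy).trans hk
    refine ⟨faceAt L (x₀, y) :: faceAt L (x₀, y') :: P, ⟨?_, ?_, ?_⟩, rfl, ?_, ?_, ?_⟩
    · exact List.forall_mem_cons.mpr ⟨⟨_, hy, rfl⟩, hfaces⟩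
    · exact List.nodup_cons.mpr ⟨fun hmem => by linarith [hlevel _ hmem], hnodup⟩
    · exact List.isChain_cons_cons.mpr ⟨hadj, hchain⟩
    · rwa [List.getLast?_cons_cons]
    · simp only [List.length_cons] at hlen ⊢
      omega
    · exact List.forall_mem_cons.mpr ⟨htop.le, fun G hG => (hlevel G hG).trans k.le_succ⟩

end Arrangement

theorem statement9_general (L : Finset (Set Pt))
    (hnv : ∀ l ∈ L, NonVertical l)
    (B : Set Pt)
    (hB : B = {p : Pt | ∀ l ∈ L, ∀ a b : ℝ,
      l = {q : Pt | q.2 = a * q.1 + b} → p.2 < a * p.1 + b}) :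
    B.Nonempty ∧ IsFace L B ∧
    ∀ F : Set Pt, IsFace L F →
      IsLeast {m : ℕ | ∃ P : List (Set Pt), IsDualPath L P ∧
          P.head? = some F ∧ P.getLast? = some B ∧ P.length = m}
        (faceLevel L F + 1) := by
  rw [setOf_forall_graph_eq_bottomRegion hnv] at hB
  subst hB
  refine ⟨bottomRegion_nonempty L, isFace_bottomRegion hnv, fun F hF => ⟨?_, ?_⟩⟩
  · obtain ⟨x₀, y, hyF, hx₀⟩ := hF.exists_mem_injOn_lineHeight hnv
    obtain ⟨P, hP, hhead, hlast, hlen, -⟩ :=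
      exists_dualPath_faceAt_to_bottomRegion hnv hx₀ _ y (hF.subset_compl hyF) rfl
    refine ⟨P, hP, hF.eq_faceAt hyF ▸ hhead, hlast, ?_⟩
    rw [hlen, faceLevel_eq_pointLevel hnv hF hyF]
  · rintro m ⟨P, hP, hhead, hlast, rfl⟩
    exact faceLevel_add_one_le_length hnv hP hhead hlast

/-- The bottom face `B` (points below every line) of a simple arrangement of `n ≥ 1`
non-vertical lines is a nonempty face, and for every face `F` the minimum length of a
dual path from `F` to `B` equals `level(F) + 1`. -/
theorem statement9 (n : ℕ) (hn : 1 ≤ n) (L : Finset (Set Pt))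
    (hL : SimpleArrangement L) (hcard : L.card = n)
    (hnv : ∀ l ∈ L, NonVertical l)
    (B : Set Pt)
    (hB : B = {p : Pt | ∀ l ∈ L, ∀ a b : ℝ,
      l = {q : Pt | q.2 = a * q.1 + b} → p.2 < a * p.1 + b}) :
    B.Nonempty ∧ IsFace L B ∧
    ∀ F : Set Pt, IsFace L F →
      IsLeast {m : ℕ | ∃ P : List (Set Pt), IsDualPath L P ∧
          P.head? = some F ∧ P.getLast? = some B ∧ P.length = m}
        (faceLevel L F + 1) :=
  statement9_general L hnv B hB
end
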